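/- arXiv:1304.4341 — 6 statements merged into one kernel-verified Lean document; each statement's English description precedes it below -/
import Mathlib

section
/- Let H be a complex Hilbert space, M a unital *-subalgebra of B(H), α : M → B(H) a map with α(x*) = α(x)* for all x ∈ M, and u ∈ B(H) an isometry (u*u = 1) such that u ∘ x = α(x) ∘ u for all x ∈ M. Then {T ∈ B(H) : α(x)T = Tx for all x ∈ M} = {y ∘ u : y ∈ B(H) and yα(x) = α(x)y for all x ∈ M}; that is, the intertwiner space E^α equals α(M)′·u, where α(M)′ is the commutant of the image of α. -/
/-!
Taking adjoints in `u x* = α(x*) u = α(x)* u` gives `u* α(x) = x u*`. Hence for `T ∈ E^α` the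
operator `T u*` commutes with every `α(x)`, and `T = (T u*) u` because `u* u = 1`. Conversely
`y u` intertwines for every `y ∈ α(M)′`, since `α(x) y u = y α(x) u = y u x`.
-/

theorem intertwines_mul_of_commute {A : Type*} [Semigroup A] {S : Set A} {α : A → A} {u : A}
    (huα : ∀ x ∈ S, u * x = α x * u) {y : A} (hy : ∀ x ∈ S, y * α x = α x * y)
    {x : A} (hx : x ∈ S) :
    α x * (y * u) = y * u * x := by
  rw [← mul_assoc, ← hy x hx, mul_assoc, ← huα x hx, mul_assoc]

section StarMonoid

variable {A : Type*} [Monoid A] [StarMul A]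

theorem star_mul_eq_mul_star_of_mul_star_eq {u x a : A} (h : u * star x = star a * u) :
    star u * a = x * star u := by
  simpa only [star_mul, star_star] using (congrArg star h).symm

variable {S : Set A} {α : A → A} {u : A}

theorem commute_mul_star_of_intertwines (hS : ∀ x ∈ S, star x ∈ S)
    (hα : ∀ x ∈ S, α (star x) = star (α x)) (huα : ∀ x ∈ S, u * x = α x * u)
    {T : A} (hT : ∀ x ∈ S, α x * T = T * x) {x : A} (hx : x ∈ S) :
    T * star u * α x = α x * (T * star u) := by
  have hu_star : star u * α x = x * star u :=
    star_mul_eq_mul_star_of_mul_star_eq (by rw [huα _ (hS x hx), hα x hx])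
  rw [mul_assoc, hu_star, ← mul_assoc, ← hT x hx, mul_assoc]

theorem setOf_intertwines_eq_commutant_mul (hS : ∀ x ∈ S, star x ∈ S)
    (hα : ∀ x ∈ S, α (star x) = star (α x)) (hu : star u * u = 1)
    (huα : ∀ x ∈ S, u * x = α x * u) :
    {T : A | ∀ x ∈ S, α x * T = T * x} =
      {T : A | ∃ y : A, (∀ x ∈ S, y * α x = α x * y) ∧ T = y * u} := by
  ext T
  constructor
  · intro hT
    exact ⟨T * star u, fun x hx => commute_mul_star_of_intertwines hS hα huα hT hx,
      by rw [mul_assoc, hu, mul_one]⟩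
  · rintro ⟨y, hy, rfl⟩ x hx
    exact intertwines_mul_of_commute huα hy hx

end StarMonoid

/-- Let `H` be a complex Hilbert space, `M` a unital *-subalgebra of `B(H)`,
`α : M → B(H)` a map with `α(x*) = α(x)*` for all `x ∈ M`, and `u ∈ B(H)` an isometry
(`u*u = 1`) such that `u ∘ x = α(x) ∘ u` for all `x ∈ M`. Then the intertwiner space
`E^α = {T : α(x)T = Tx ∀ x ∈ M}` equals `α(M)′·u`, where `α(M)′` is the commutant of the
image of `α`. -/
theorem stmt3 {H : Type*} [NormedAddCommGroup H] [InnerProductSpace ℂ H] [CompleteSpace H]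
    (M : StarSubalgebra ℂ (H →L[ℂ] H))
    (α : (H →L[ℂ] H) → (H →L[ℂ] H))
    (hα : ∀ x ∈ M, α (star x) = star (α x))
    (u : H →L[ℂ] H) (hu : star u * u = 1)
    (huα : ∀ x ∈ M, u * x = α x * u) :
    {T : H →L[ℂ] H | ∀ x ∈ M, α x * T = T * x} =
      {T : H →L[ℂ] H | ∃ y : H →L[ℂ] H, (∀ x ∈ M, y * α x = α x * y) ∧ T = y * u} :=
  setOf_intertwines_eq_commutant_mul (S := M) (fun _ => star_mem) hα hu huα
end

section
/- Let H be a complex Hilbert space, M a unital *-subalgebra of B(H), and Ω ∈ H a vector that is cyclic for the commutant M′ (i.e. {yΩ : y ∈ M′} is dense in H). Let α : M → B(H) be a map and u ∈ B(H) an isometry with uΩ = Ω. If T ∈ B(H) satisfies α(x)T = Tx for all x ∈ M and T* ∘ (y ∘ u) = 0 for every y ∈ M′, then T = 0. (This is the key step showing that the intertwiner space E^α coincides with the closure of M′u.) -/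
theorem stmt4_general {H : Type*} [NormedAddCommGroup H] [InnerProductSpace ℂ H] [CompleteSpace H]
    (M : StarSubalgebra ℂ (H →L[ℂ] H)) (Ω : H)
    (hcyc : Dense {ξ : H | ∃ y : H →L[ℂ] H, (∀ x ∈ M, y * x = x * y) ∧ y Ω = ξ})
    (u : H →L[ℂ] H) (huΩ : u Ω = Ω)
    (T : H →L[ℂ] H)
    (horth : ∀ y : H →L[ℂ] H, (∀ x ∈ M, y * x = x * y) → star T * (y * u) = 0) :
    T = 0 := by
  have hvanish : Set.EqOn ⇑(star T) 0
      {ξ : H | ∃ y : H →L[ℂ] H, (∀ x ∈ M, y * x = x * y) ∧ y Ω = ξ} := by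
    rintro _ ⟨y, hy, rfl⟩
    rw [← huΩ]
    exact DFunLike.congr_fun (horth y hy) Ω
  have hstar : star T = 0 :=
    DFunLike.coe_injective (Continuous.ext_on hcyc (star T).continuous continuous_const hvanish)
  exact star_eq_zero.mp hstar

/-- Let `H` be a complex Hilbert space, `M` a unital *-subalgebra of `B(H)`,
and `Ω ∈ H` a vector that is cyclic for the commutant `M′`. Let `α : M → B(H)` be a map and
`u ∈ B(H)` an isometry with `uΩ = Ω`. If `T ∈ B(H)` satisfies `α(x)T = Tx` for all `x ∈ M`
and `T* ∘ (y ∘ u) = 0` for every `y ∈ M′`, then `T = 0`. -/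
theorem stmt4 {H : Type*} [NormedAddCommGroup H] [InnerProductSpace ℂ H] [CompleteSpace H]
    (M : StarSubalgebra ℂ (H →L[ℂ] H)) (Ω : H)
    (hcyc : Dense {ξ : H | ∃ y : H →L[ℂ] H, (∀ x ∈ M, y * x = x * y) ∧ y Ω = ξ})
    (α : (H →L[ℂ] H) → (H →L[ℂ] H))
    (u : H →L[ℂ] H) (hu : star u * u = 1) (huΩ : u Ω = Ω)
    (T : H →L[ℂ] H)
    (hT : ∀ x ∈ M, α x * T = T * x)
    (horth : ∀ y : H →L[ℂ] H, (∀ x ∈ M, y * x = x * y) → star T * (y * u) = 0) :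
    T = 0 :=
  stmt4_general M Ω hcyc u huΩ T horth
end

section
/- Let H be a complex Hilbert space, M a *-subalgebra of B(H), α : M → M a map with α(x*) = α(x)* for all x ∈ M, and u ∈ B(H) an isometry (u*u = 1) with u ∘ x = α(x) ∘ u for all x ∈ M. Suppose in addition there is a map α′ : M′ → M′ with u ∘ y = α′(y) ∘ u for all y ∈ M′ (the equi-modular situation). Then {u*yu : y ∈ M′} = M′. -/
/-! Taking adjoints in `u x* = α(x*) u = α(x)* u` gives `x u* = u* α(x)`, so `u* y u` commutes
with `x ∈ M` whenever `y` commutes with `α(x) ∈ M`. Conversely an element `z` of `M′` is the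
compression `z = u* u z = u* α′(z) u` of `α′(z) ∈ M′`. -/

theorem mul_star_eq_star_mul_of_mul_star_eq_star_mul {R : Type*} [Mul R] [StarMul R]
    {u x a : R} (h : u * star x = star a * u) : x * star u = star u * a := by
  simpa only [star_mul, star_star] using congrArg star h

theorem commute_mul_mul_of_intertwine {S : Type*} [Semigroup S] {v u x y a : S}
    (hy : y * a = a * y) (hu : u * x = a * u) (hv : x * v = v * a) :
    Commute (v * y * u) x :=
  calc v * y * u * x = v * y * a * u := by simp only [mul_assoc, hu]
    _ = v * a * y * u := by rw [mul_assoc v y, hy, ← mul_assoc]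
    _ = x * v * y * u := by rw [hv]
    _ = x * (v * y * u) := by simp only [mul_assoc]

theorem eq_mul_mul_of_mul_eq_one_of_mul_eq {M : Type*} [Monoid M] {v u z b : M}
    (hvu : v * u = 1) (hu : u * z = b * u) : z = v * b * u := by
  rw [mul_assoc, ← hu, ← mul_assoc, hvu, one_mul]

/-- Let `H` be a complex Hilbert space, `M` a *-subalgebra of `B(H)`,
`α : M → M` a map with `α(x*) = α(x)*` for all `x ∈ M`, and `u ∈ B(H)` an isometry
(`u*u = 1`) with `u ∘ x = α(x) ∘ u` for all `x ∈ M`. Suppose in addition there is a map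
`α′ : M′ → M′` with `u ∘ y = α′(y) ∘ u` for all `y ∈ M′` (the equi-modular situation).
Then `{u*yu : y ∈ M′} = M′`. -/
theorem stmt6 {H : Type*} [NormedAddCommGroup H] [InnerProductSpace ℂ H] [CompleteSpace H]
    (M : NonUnitalStarSubalgebra ℂ (H →L[ℂ] H))
    (α : (H →L[ℂ] H) → (H →L[ℂ] H))
    (hαmem : ∀ x ∈ M, α x ∈ M)
    (hα : ∀ x ∈ M, α (star x) = star (α x))
    (u : H →L[ℂ] H) (hu : star u * u = 1)
    (huα : ∀ x ∈ M, u * x = α x * u)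
    (α' : (H →L[ℂ] H) → (H →L[ℂ] H))
    (hα'mem : ∀ y : H →L[ℂ] H, (∀ x ∈ M, y * x = x * y) →
      (∀ x ∈ M, α' y * x = x * α' y))
    (huα' : ∀ y : H →L[ℂ] H, (∀ x ∈ M, y * x = x * y) → u * y = α' y * u) :
    {z : H →L[ℂ] H | ∃ y : H →L[ℂ] H, (∀ x ∈ M, y * x = x * y) ∧ z = star u * y * u} =
      {y : H →L[ℂ] H | ∀ x ∈ M, y * x = x * y} := by
  ext z
  constructor
  · rintro ⟨y, hy, rfl⟩ x hx
    have hadj : x * star u = star u * α x :=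
      mul_star_eq_star_mul_of_mul_star_eq_star_mul <| by
        rw [huα _ (star_mem hx), hα x hx]
    exact commute_mul_mul_of_intertwine (hy _ (hαmem x hx)) (huα x hx) hadj
  · intro hz
    exact ⟨α' z, hα'mem z hz, eq_mul_mul_of_mul_eq_one_of_mul_eq hu (huα' z hz)⟩
end

section
/- In the concrete quasi-free CAR model with λ : ℤ → ℝ, 0 < λ_l < 1 for all l, the operators a_l satisfy the canonical anticommutation relations: for all l, m ∈ ℤ, a_l∘a_m + a_m∘a_l = 0 and a_l∘a_m* + a_m*∘a_l = δ_{l,m}·1, where δ_{l,m} is 1 if l = m and 0 otherwise. -/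
/- The concrete quasi-free CAR model: `H = ℓ²(Finset ℤ × Finset ℤ)` with orthonormal basis
`e (A, B)`, vacuum `Ω = e (∅, ∅)`, and operators `a l`, `b l`, `G` given on the basis by the
quasi-free formulas with symbol `λ` (diagonal, `R h_l = λ_l h_l`). -/

noncomputable section

/-- The GNS Hilbert space: `ℓ²` over pairs of finite subsets of `ℤ`. -/
abbrev CARSpace := lp (fun _ : Finset ℤ × Finset ℤ => ℂ) 2

/-- The orthonormal basis vector `e_{(A,B)}`. -/
def carE (p : Finset ℤ × Finset ℤ) : CARSpace := lp.single 2 p 1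

/-- The vacuum vector `Ω = e_{(∅,∅)}`. -/
def carΩ : CARSpace := carE (∅, ∅)

/-- `n(l, X)` = number of elements of `X` strictly below `l`. -/
def nlt (l : ℤ) (X : Finset ℤ) : ℕ := (X.filter fun j => j < l).card

/-- `a` is the family of quasi-free annihilation-type operators `a_l = π_R(a(h_l))`:
`a_l e_{(A,B)} = √(1−λ_l)·(−1)^{|B|}·(−1)^{n(l,A)}·[l ∉ A]·e_{(A∪{l},B)}
              + √(λ_l)·(−1)^{n(l,B)}·[l ∈ B]·e_{(A,B∖{l})}`. -/
def IsCAR_a (lam : ℤ → ℝ) (a : ℤ → CARSpace →L[ℂ] CARSpace) : Prop :=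
  ∀ (l : ℤ) (A B : Finset ℤ),
    a l (carE (A, B)) =
      ((Real.sqrt (1 - lam l) : ℂ) * (-1) ^ B.card * (-1) ^ nlt l A *
          (if l ∈ A then 0 else 1)) • carE (insert l A, B) +
      ((Real.sqrt (lam l) : ℂ) * (-1) ^ nlt l B *
          (if l ∈ B then 1 else 0)) • carE (A, B.erase l)

/-- `b` is the family of commutant quasi-free operators:
`b_l e_{(A,B)} = √(λ_l)·(−1)^{|B|}·(−1)^{n(l,A)}·[l ∉ A]·e_{(A∪{l},B)}
              − √(1−λ_l)·(−1)^{n(l,B)}·[l ∈ B]·e_{(A,B∖{l})}`. -/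
def IsCAR_b (lam : ℤ → ℝ) (b : ℤ → CARSpace →L[ℂ] CARSpace) : Prop :=
  ∀ (l : ℤ) (A B : Finset ℤ),
    b l (carE (A, B)) =
      ((Real.sqrt (lam l) : ℂ) * (-1) ^ B.card * (-1) ^ nlt l A *
          (if l ∈ A then 0 else 1)) • carE (insert l A, B) -
      ((Real.sqrt (1 - lam l) : ℂ) * (-1) ^ nlt l B *
          (if l ∈ B then 1 else 0)) • carE (A, B.erase l)

/-- `G = Γ⊗Γ` : `G e_{(A,B)} = (−1)^{|A|+|B|} e_{(A,B)}`. -/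
def IsCAR_G (G : CARSpace →L[ℂ] CARSpace) : Prop :=
  ∀ (A B : Finset ℤ), G (carE (A, B)) = ((-1 : ℂ) ^ (A.card + B.card)) • carE (A, B)

local notation "⟪" x ", " y "⟫" => @inner ℂ _ _ x y

/-! Order the modes `ℤ ⊕ₗ ℤ` so that every mode `inlₗ l` of the second factor (the set `B`)
precedes every mode `inrₗ l` of the first factor (the set `A`). Then `(A, B) ↦ B ⊔ A`
identifies the basis of `CARSpace` with the occupation basis of the fermionic Fock space over
this ordered set, and the signs `(-1)^{|B|} (-1)^{n(l,A)}` and `(-1)^{n(l,B)}` become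
Jordan–Wigner signs. Hence `a_l = √(1-λ_l) c*_{inr l} + √λ_l c_{inl l}` and
`a_l* = √(1-λ_l) c_{inr l} + √λ_l c*_{inl l}` for the Jordan–Wigner operators `c_x`, which
satisfy the CAR over any linearly ordered set. Expanding the anticommutators bilinearly and
using `(1 - λ_l) + λ_l = 1` gives the relations. All computations take place on finitely
supported vectors, whose image in `CARSpace` is dense. -/

lemma smul_add_smul_anticomm {R : Type*} [Ring R] [Module ℂ R] [IsScalarTower ℂ R R]
    [SMulCommClass ℂ R R] (s t s' t' : ℂ) (c d c' d' : R) :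
    (s • c + t • d) * (s' • c' + t' • d') + (s' • c' + t' • d') * (s • c + t • d) =
      (s * s') • (c * c' + c' * c) + (s * t') • (c * d' + d' * c) +
        (t * s') • (d * c' + c' * d) + (t * t') • (d * d' + d' * d) := by
  simp only [add_mul, mul_add, smul_mul_smul_comm]
  module

lemma anticomm_comp_eq_of_comp_eq {R V W : Type*} [CommSemiring R] [AddCommMonoid V]
    [Module R V] [AddCommMonoid W] [Module R W] {ι : V →ₗ[R] W} {T S : Module.End R W}
    {L M : Module.End R V} (hT : T ∘ₗ ι = ι ∘ₗ L) (hS : S ∘ₗ ι = ι ∘ₗ M) :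
    (T * S + S * T) ∘ₗ ι = ι ∘ₗ (L * M + M * L) := by
  have hT' (v : V) : T (ι v) = ι (L v) := LinearMap.congr_fun hT v
  have hS' (v : V) : S (ι v) = ι (M v) := LinearMap.congr_fun hS v
  ext v
  simp [hT', hS']

def IsFormalAdjoint {P : Type*} (L M : Module.End ℂ (P →₀ ℂ)) : Prop :=
  ∀ S U, M (Finsupp.single S 1) U = star (L (Finsupp.single U 1) S)

namespace IsFormalAdjoint

variable {P : Type*} {L M L' M' : Module.End ℂ (P →₀ ℂ)}

lemma symm (h : IsFormalAdjoint L M) : IsFormalAdjoint M L := fun S U => by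
  rw [h, star_star]

lemma add (h : IsFormalAdjoint L M) (h' : IsFormalAdjoint L' M') :
    IsFormalAdjoint (L + L') (M + M') := fun S U => by
  simp [h S U, h' S U]

lemma real_smul (h : IsFormalAdjoint L M) (r : ℝ) :
    IsFormalAdjoint ((r : ℂ) • L) ((r : ℂ) • M) := fun S U => by
  simp [h S U]

end IsFormalAdjoint

namespace Fock

variable {X : Type*} [LinearOrder X]

open Finset Finsupp

abbrev FockSpace (X : Type*) := Finset X →₀ ℂ

def jordanWignerSign (x : X) (S : Finset X) : ℂ := (-1) ^ #{y ∈ S | y < x}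

def annihilation (x : X) : Module.End ℂ (FockSpace X) :=
  linearCombination ℂ fun S => if x ∈ S then single (S.erase x) (jordanWignerSign x S) else 0

def creation (x : X) : Module.End ℂ (FockSpace X) :=
  linearCombination ℂ fun S => if x ∈ S then 0 else single (insert x S) (jordanWignerSign x S)

lemma annihilation_single (x : X) (S : Finset X) (c : ℂ) :
    annihilation x (single S c) =
      if x ∈ S then single (S.erase x) (c * jordanWignerSign x S) else 0 := by
  rw [annihilation, linearCombination_single]
  split_ifs <;> simp [smul_single]

lemma creation_single (x : X) (S : Finset X) (c : ℂ) :
    creation x (single S c) =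
      if x ∈ S then 0 else single (insert x S) (c * jordanWignerSign x S) := by
  rw [creation, linearCombination_single]
  split_ifs <;> simp [smul_single]

lemma jordanWignerSign_insert {y : X} {S : Finset X} (hy : y ∉ S) (x : X) :
    jordanWignerSign x (insert y S) = (if y < x then -1 else 1) * jordanWignerSign x S := by
  rw [jordanWignerSign, jordanWignerSign, filter_insert]
  split_ifs with h
  · rw [card_insert_of_notMem (by simp [hy]), pow_succ, mul_comm]
  · rw [one_mul]

lemma jordanWignerSign_erase {y : X} {S : Finset X} (hy : y ∈ S) (x : X) :
    jordanWignerSign x (S.erase y) = (if y < x then -1 else 1) * jordanWignerSign x S := by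
  conv_rhs => rw [← insert_erase hy, jordanWignerSign_insert (notMem_erase y S), ← mul_assoc]
  split_ifs <;> simp

lemma jordanWignerSign_insert_self (x : X) (S : Finset X) :
    jordanWignerSign x (insert x S) = jordanWignerSign x S := by
  by_cases hx : x ∈ S
  · rw [insert_eq_of_mem hx]
  · simp [jordanWignerSign_insert hx]

lemma jordanWignerSign_erase_self (x : X) (S : Finset X) :
    jordanWignerSign x (S.erase x) = jordanWignerSign x S := by
  by_cases hx : x ∈ S
  · rw [jordanWignerSign_erase hx]; simp
  · rw [erase_eq_of_notMem hx]

lemma ite_lt_add_ite_lt_of_ne {x y : X} (h : x ≠ y) :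
    ((if y < x then -1 else 1) + (if x < y then -1 else 1) : ℂ) = 0 := by
  rcases h.lt_or_gt with h | h
  · simp [h, h.not_gt]
  · simp [h, h.not_gt]

theorem annihilation_anticomm (x y : X) :
    annihilation x * annihilation y + annihilation y * annihilation x = 0 := by
  refine lhom_ext fun S c => ?_
  simp only [LinearMap.add_apply, Module.End.mul_apply, LinearMap.zero_apply]
  rcases eq_or_ne x y with rfl | hxy
  · by_cases hx : x ∈ S <;> simp only [annihilation_single, hx, if_false, if_true, map_zero,
      notMem_erase, add_zero]
  by_cases hx : x ∈ S <;> by_cases hy : y ∈ S <;>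
    simp only [annihilation_single, hx, hy, if_false, if_true, map_zero, add_zero, mem_erase,
      ne_eq, hxy, Ne.symm hxy, not_false_eq_true, and_true, and_false]
  rw [erase_right_comm, ← single_add, jordanWignerSign_erase hx, jordanWignerSign_erase hy,
    single_eq_zero]
  linear_combination
    c * jordanWignerSign x S * jordanWignerSign y S * ite_lt_add_ite_lt_of_ne hxy

theorem creation_anticomm (x y : X) :
    creation x * creation y + creation y * creation x = 0 := by
  refine lhom_ext fun S c => ?_
  simp only [LinearMap.add_apply, Module.End.mul_apply, LinearMap.zero_apply]
  rcases eq_or_ne x y with rfl | hxy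
  · by_cases hx : x ∈ S <;> simp only [creation_single, hx, if_false, if_true, map_zero,
      mem_insert_self, add_zero]
  by_cases hx : x ∈ S <;> by_cases hy : y ∈ S <;>
    simp only [creation_single, hx, hy, if_false, if_true, map_zero, add_zero, mem_insert,
      hxy, Ne.symm hxy, or_self, or_true]
  rw [insert_comm, ← single_add, jordanWignerSign_insert hx, jordanWignerSign_insert hy,
    single_eq_zero]
  linear_combination
    c * jordanWignerSign x S * jordanWignerSign y S * ite_lt_add_ite_lt_of_ne hxy

lemma jordanWignerSign_mul_self (x : X) (S : Finset X) :
    jordanWignerSign x S * jordanWignerSign x S = 1 := by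
  rw [jordanWignerSign, ← mul_pow]; norm_num

theorem annihilation_creation_anticomm (x y : X) :
    annihilation x * creation y + creation y * annihilation x = if x = y then 1 else 0 := by
  refine lhom_ext fun S c => ?_
  simp only [LinearMap.add_apply, Module.End.mul_apply]
  rcases eq_or_ne x y with rfl | hxy
  · by_cases hx : x ∈ S <;>
      simp only [creation_single, annihilation_single, hx, if_false, if_true, map_zero,
        mem_insert_self, notMem_erase, add_zero, zero_add, insert_erase, erase_insert,
        jordanWignerSign_insert_self, jordanWignerSign_erase_self, mul_assoc,
        jordanWignerSign_mul_self, mul_one, Module.End.one_apply, not_false_eq_true]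
  by_cases hx : x ∈ S <;> by_cases hy : y ∈ S <;>
    simp only [creation_single, annihilation_single, hx, hy, if_false, if_true, map_zero,
      add_zero, mem_insert, mem_erase, hxy, Ne.symm hxy, or_false, false_or, ne_eq, and_true,
      and_false, not_false_eq_true, LinearMap.zero_apply]
  rw [erase_insert_of_ne (Ne.symm hxy), ← single_add, jordanWignerSign_insert hy,
    jordanWignerSign_erase hx, single_eq_zero]
  linear_combination
    c * jordanWignerSign x S * jordanWignerSign y S * ite_lt_add_ite_lt_of_ne hxy

theorem annihilation_creation_anticomm_of_ne {x y : X} (h : x ≠ y) :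
    annihilation x * creation y + creation y * annihilation x = 0 := by
  rw [annihilation_creation_anticomm, if_neg h]

lemma star_jordanWignerSign (x : X) (S : Finset X) :
    star (jordanWignerSign x S) = jordanWignerSign x S := by
  simp [jordanWignerSign]

lemma isFormalAdjoint_creation_annihilation (x : X) :
    IsFormalAdjoint (creation x) (annihilation x) := fun S U => by
  rw [annihilation_single, creation_single]
  by_cases hSU : S = insert x U ∧ x ∉ U
  · obtain ⟨rfl, hU⟩ := hSU
    simp [hU, erase_insert hU, jordanWignerSign_insert_self, star_jordanWignerSign]
  · have hU : x ∈ S → S.erase x ≠ U := by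
      rintro hS rfl
      exact hSU ⟨(insert_erase hS).symm, notMem_erase x S⟩
    by_cases hS : x ∈ S <;> by_cases hxU : x ∈ U <;>
      simp_all [eq_comm]

end Fock

open Finset Finsupp Fock Sum

def fockConfig : Finset ℤ × Finset ℤ ≃ Finset (ℤ ⊕ₗ ℤ) :=
  (Finset.sumEquiv.toEquiv.trans (Equiv.prodComm _ _)).symm.trans (Equiv.finsetCongr toLex)

lemma fockConfig_apply (A B : Finset ℤ) :
    fockConfig (A, B) = (B.disjSum A).map toLex.toEmbedding := by
  simp [fockConfig, Equiv.finsetCongr_apply]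

lemma inrₗ_mem_fockConfig {l : ℤ} {A B : Finset ℤ} : inrₗ l ∈ fockConfig (A, B) ↔ l ∈ A := by
  simp [fockConfig_apply]

lemma inlₗ_mem_fockConfig {l : ℤ} {A B : Finset ℤ} : inlₗ l ∈ fockConfig (A, B) ↔ l ∈ B := by
  simp [fockConfig_apply]

-- The `DecidableEq` instance is left arbitrary so that these also rewrite the `insert` and
-- `erase` inside `creation` and `annihilation`, which come from the `LinearOrder` instance.
lemma insert_inrₗ_fockConfig [DecidableEq (ℤ ⊕ₗ ℤ)] (l : ℤ) (A B : Finset ℤ) :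
    insert (inrₗ l) (fockConfig (A, B)) = fockConfig (insert l A, B) := by
  ext x
  obtain ⟨x | x, rfl⟩ := toLex.surjective x <;> simp [fockConfig_apply]

lemma erase_inlₗ_fockConfig [DecidableEq (ℤ ⊕ₗ ℤ)] (l : ℤ) (A B : Finset ℤ) :
    (fockConfig (A, B)).erase (inlₗ l) = fockConfig (A, B.erase l) := by
  ext x
  obtain ⟨x | x, rfl⟩ := toLex.surjective x <;> simp [fockConfig_apply]

lemma card_fockConfig (A B : Finset ℤ) : #(fockConfig (A, B)) = #B + #A := by
  rw [fockConfig_apply, card_map, card_disjSum]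

lemma filter_lt_inrₗ_fockConfig (l : ℤ) (A B : Finset ℤ) :
    {y ∈ fockConfig (A, B) | y < inrₗ l} = fockConfig ({j ∈ A | j < l}, B) := by
  ext x
  obtain ⟨x | x, rfl⟩ := toLex.surjective x <;> simp [fockConfig_apply]

lemma filter_lt_inlₗ_fockConfig (l : ℤ) (A B : Finset ℤ) :
    {y ∈ fockConfig (A, B) | y < inlₗ l} = fockConfig (∅, {j ∈ B | j < l}) := by
  ext x
  obtain ⟨x | x, rfl⟩ := toLex.surjective x <;> simp [fockConfig_apply]

lemma jordanWignerSign_inrₗ_fockConfig (l : ℤ) (A B : Finset ℤ) :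
    jordanWignerSign (inrₗ l) (fockConfig (A, B)) = (-1) ^ #B * (-1) ^ nlt l A := by
  rw [jordanWignerSign, filter_lt_inrₗ_fockConfig, card_fockConfig, pow_add, nlt]

lemma jordanWignerSign_inlₗ_fockConfig (l : ℤ) (A B : Finset ℤ) :
    jordanWignerSign (inlₗ l) (fockConfig (A, B)) = (-1) ^ nlt l B := by
  rw [jordanWignerSign, filter_lt_inlₗ_fockConfig, card_fockConfig, card_empty, add_zero, nlt]

lemma carE_apply (p q : Finset ℤ × Finset ℤ) :
    (carE p : Finset ℤ × Finset ℤ → ℂ) q = if q = p then 1 else 0 := by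
  simp [carE, Pi.single_apply]

lemma inner_carE_left (p : Finset ℤ × Finset ℤ) (f : CARSpace) : ⟪carE p, f⟫ = f p := by
  simp [carE, lp.inner_single_left]

lemma ext_carE {T S : CARSpace →L[ℂ] CARSpace} (h : ∀ p, T (carE p) = S (carE p)) : T = S := by
  refine ContinuousLinearMap.ext fun f => ?_
  have hf : HasSum (fun q => f q • carE q) f := by
    simpa [carE, ← lp.single_smul] using lp.hasSum_single ENNReal.ofNat_ne_top f
  exact (hf.mapL T).unique <| by simpa only [map_smul, h] using hf.mapL S

lemma star_apply_carE {T : CARSpace →L[ℂ] CARSpace} (f : CARSpace) (q : Finset ℤ × Finset ℤ) :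
    (star T f : Finset ℤ × Finset ℤ → ℂ) q = ⟪T (carE q), f⟫ := by
  rw [← inner_carE_left, ContinuousLinearMap.star_eq_adjoint,
    ContinuousLinearMap.adjoint_inner_right]

def fockEmbed : FockSpace (ℤ ⊕ₗ ℤ) →ₗ[ℂ] CARSpace :=
  linearCombination ℂ fun S => carE (fockConfig.symm S)

lemma fockEmbed_single (p : Finset ℤ × Finset ℤ) (c : ℂ) :
    fockEmbed (single (fockConfig p) c) = c • carE p := by
  simp [fockEmbed]

lemma fockEmbed_apply (v : FockSpace (ℤ ⊕ₗ ℤ)) (q : Finset ℤ × Finset ℤ) :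
    (fockEmbed v : Finset ℤ × Finset ℤ → ℂ) q = v (fockConfig q) := by
  induction v using Finsupp.induction_linear with
  | zero => simp
  | add v w hv hw => simp [hv, hw]
  | single S c =>
    obtain ⟨p, rfl⟩ := fockConfig.surjective S
    simp [fockEmbed_single, carE_apply, single_apply, eq_comm]

lemma ext_of_comp_fockEmbed {T S : CARSpace →L[ℂ] CARSpace}
    (h : T.toLinearMap ∘ₗ fockEmbed = S.toLinearMap ∘ₗ fockEmbed) : T = S :=
  ext_carE fun p => by simpa [fockEmbed_single] using congr($h (single (fockConfig p) 1))

lemma star_comp_fockEmbed {T : CARSpace →L[ℂ] CARSpace}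
    {L M : Module.End ℂ (FockSpace (ℤ ⊕ₗ ℤ))}
    (hT : T.toLinearMap ∘ₗ fockEmbed = fockEmbed ∘ₗ L) (hLM : IsFormalAdjoint L M) :
    (star T).toLinearMap ∘ₗ fockEmbed = fockEmbed ∘ₗ M := by
  refine lhom_ext fun S c => ?_
  obtain ⟨p, rfl⟩ := fockConfig.surjective S
  have hTq (q) : T (carE q) = fockEmbed (L (single (fockConfig q) 1)) := by
    simpa [fockEmbed_single] using congr($hT (single (fockConfig q) 1))
  apply lp.ext; funext q
  rw [LinearMap.comp_apply, LinearMap.comp_apply, ContinuousLinearMap.coe_coe, fockEmbed_single,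
    star_apply_carE, fockEmbed_apply, hTq, inner_smul_right, ← smul_single_one _ c, map_smul,
    Finsupp.smul_apply, hLM, ← inner_conj_symm, inner_carE_left, fockEmbed_apply, smul_eq_mul]
  rfl

def fockA (lam : ℤ → ℝ) (l : ℤ) : Module.End ℂ (FockSpace (ℤ ⊕ₗ ℤ)) :=
  (Real.sqrt (1 - lam l) : ℂ) • creation (inrₗ l) +
    (Real.sqrt (lam l) : ℂ) • annihilation (inlₗ l)

def fockAStar (lam : ℤ → ℝ) (l : ℤ) : Module.End ℂ (FockSpace (ℤ ⊕ₗ ℤ)) :=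
  (Real.sqrt (1 - lam l) : ℂ) • annihilation (inrₗ l) +
    (Real.sqrt (lam l) : ℂ) • creation (inlₗ l)

lemma isFormalAdjoint_fockA (lam : ℤ → ℝ) (l : ℤ) :
    IsFormalAdjoint (fockA lam l) (fockAStar lam l) :=
  ((isFormalAdjoint_creation_annihilation _).real_smul _).add
    ((isFormalAdjoint_creation_annihilation _).symm.real_smul _)

lemma IsCAR_a.comp_fockEmbed {lam : ℤ → ℝ} {a : ℤ → CARSpace →L[ℂ] CARSpace}
    (ha : IsCAR_a lam a) (l : ℤ) :
    (a l).toLinearMap ∘ₗ fockEmbed = fockEmbed ∘ₗ fockA lam l := by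
  refine lhom_ext fun S c => ?_
  obtain ⟨⟨A, B⟩, rfl⟩ := fockConfig.surjective S
  simp only [LinearMap.comp_apply, ContinuousLinearMap.coe_coe, fockEmbed_single, map_smul,
    ha l A B, fockA, LinearMap.add_apply, LinearMap.smul_apply, creation_single,
    annihilation_single,
    inrₗ_mem_fockConfig, inlₗ_mem_fockConfig, insert_inrₗ_fockConfig, erase_inlₗ_fockConfig,
    jordanWignerSign_inrₗ_fockConfig, jordanWignerSign_inlₗ_fockConfig]
  split_ifs <;>
    simp only [smul_zero, add_zero, zero_add, map_add, map_smul, fockEmbed_single, smul_add,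
      smul_smul, mul_zero, mul_one, zero_smul, map_zero] <;>
    match_scalars <;> ring

lemma fockA_anticomm (lam : ℤ → ℝ) (l m : ℤ) :
    fockA lam l * fockA lam m + fockA lam m * fockA lam l = 0 := by
  rw [fockA, fockA, smul_add_smul_anticomm (R := Module.End ℂ (FockSpace (ℤ ⊕ₗ ℤ))),
    creation_anticomm, annihilation_anticomm, add_comm (creation _ * _),
    annihilation_creation_anticomm_of_ne (by simp), annihilation_creation_anticomm_of_ne (by simp)]
  simp

lemma fockA_fockAStar_anticomm {lam : ℤ → ℝ} (hlam : ∀ l, 0 ≤ lam l ∧ lam l ≤ 1) (l m : ℤ) :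
    fockA lam l * fockAStar lam m + fockAStar lam m * fockA lam l =
      if l = m then 1 else 0 := by
  rw [fockA, fockAStar, smul_add_smul_anticomm (R := Module.End ℂ (FockSpace (ℤ ⊕ₗ ℤ))),
    creation_anticomm, annihilation_anticomm, add_comm (creation _ * _),
    annihilation_creation_anticomm, annihilation_creation_anticomm]
  rcases eq_or_ne l m with rfl | hlm
  · have h1 : (Real.sqrt (1 - lam l) : ℂ) * Real.sqrt (1 - lam l) = 1 - lam l := by
      rw [← Complex.ofReal_mul, Real.mul_self_sqrt (by linarith [hlam l]), Complex.ofReal_sub,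
        Complex.ofReal_one]
    have h2 : (Real.sqrt (lam l) : ℂ) * Real.sqrt (lam l) = lam l := by
      rw [← Complex.ofReal_mul, Real.mul_self_sqrt (hlam l).1]
    simp only [if_true, h1, h2, smul_zero, add_zero, ← add_smul]
    simp
  · simp [hlm, Ne.symm hlm]

/-- in the concrete quasi-free CAR model with `0 < λ_l < 1`, the operators
`a_l` satisfy the canonical anticommutation relations: for all `l, m ∈ ℤ`,
`a_l a_m + a_m a_l = 0` and `a_l a_m* + a_m* a_l = δ_{l,m}·1`. -/
theorem stmt8 (lam : ℤ → ℝ) (hlam : ∀ l, 0 < lam l ∧ lam l < 1)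
    (a : ℤ → CARSpace →L[ℂ] CARSpace) (ha : IsCAR_a lam a) :
    ∀ l m : ℤ,
      a l * a m + a m * a l = 0 ∧
      a l * star (a m) + star (a m) * a l =
        (if l = m then (1 : ℂ) else 0) • (1 : CARSpace →L[ℂ] CARSpace) := by
  have hA := ha.comp_fockEmbed
  have hA' (m : ℤ) := star_comp_fockEmbed (hA m) (isFormalAdjoint_fockA lam m)
  intro l m
  constructor
  · apply ext_of_comp_fockEmbed
    rw [ContinuousLinearMap.toLinearMap_add, ContinuousLinearMap.toLinearMap_mul,
      ContinuousLinearMap.toLinearMap_mul, anticomm_comp_eq_of_comp_eq (hA l) (hA m),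
      fockA_anticomm]
    simp
  · apply ext_of_comp_fockEmbed
    rw [ContinuousLinearMap.toLinearMap_add, ContinuousLinearMap.toLinearMap_mul,
      ContinuousLinearMap.toLinearMap_mul, anticomm_comp_eq_of_comp_eq (hA l) (hA' m),
      fockA_fockAStar_anticomm (fun l => ⟨(hlam l).1.le, (hlam l).2.le⟩)]
    split_ifs <;> ext <;> simp

end
end

section
/- In the concrete quasi-free CAR model with past P = {n ∈ ℤ : n < 0} and future F = {n ∈ ℤ : n ≥ 0}: assume there is ε ∈ (0,1/2) with ε ≤ λ_l ≤ 1−ε and λ_l ≠ 1/2 for all l ∈ ℤ. If ξ ∈ H satisfies the l-th intertwining equations for every l ∈ F, then ξ belongs to the closed linear span of the set {e_{(A,B)} : A ⊆ P, B ⊆ P finite, card A ≡ card B (mod 2)}. -/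
/- The concrete quasi-free CAR model: `H = ℓ²(Finset ℤ × Finset ℤ)` with orthonormal basis
`e (A, B)`, vacuum `Ω = e (∅, ∅)`, and operators `a l`, `b l`, `G` given on the basis by the
quasi-free formulas with symbol `λ` (diagonal, `R h_l = λ_l h_l`). -/

noncomputable section

/-- `ξ` satisfies the `l`-th intertwining equations:
`(1−λ_l)^{−1/2}·(a_l ξ) = −λ_l^{−1/2}·G(b_l ξ)` and
`λ_l^{−1/2}·(a_l* ξ) = −(1−λ_l)^{−1/2}·b_l*(G ξ)`. -/
def IntertwinesAt (lam : ℤ → ℝ) (a b : ℤ → CARSpace →L[ℂ] CARSpace)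
    (G : CARSpace →L[ℂ] CARSpace) (l : ℤ) (ξ : CARSpace) : Prop :=
  (Real.sqrt (1 - lam l) : ℂ)⁻¹ • a l ξ = -((Real.sqrt (lam l) : ℂ)⁻¹) • G (b l ξ) ∧
  (Real.sqrt (lam l) : ℂ)⁻¹ • (star (a l)) ξ =
    -((Real.sqrt (1 - lam l) : ℂ)⁻¹) • (star (b l)) (G ξ)

/-- The "past" subspace: closed linear span of the `e_{(A,B)}` with `A, B ⊆ P = {n < 0}`
and `card A ≡ card B (mod 2)`. -/
def pastSpan : Set CARSpace :=
  closure (Submodule.span ℂ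
    {v : CARSpace | ∃ A B : Finset ℤ,
      (∀ n ∈ A, n < 0) ∧ (∀ n ∈ B, n < 0) ∧ A.card % 2 = B.card % 2 ∧ v = carE (A, B)} :
    Set CARSpace)

/-! The intertwining equations at a site `l ≥ 0`, read off at single coordinates, are linear
relations between `ξ (A, B)` and the coordinates obtained by adding `l` to `A`, to `B`, or to
both. As `λ_l ≠ 1/2`, they force `ξ (A, B) = 0` whenever `l ∈ A ∪ B` and `|A| + |B|` is even.
When `|A| + |B|` is odd they give instead
`2 √(λ_l (1 - λ_l)) ‖ξ (A, B)‖ ≤ ‖ξ (A ∪ {l}, B ∪ {l})‖` for every `l ≥ 0` outside `A ∪ B`;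
the left side is at least `2ε ‖ξ (A, B)‖`, while the right side tends to `0` as `l → ∞`
because `ξ ∈ ℓ²`. So `ξ` is supported on the pairs spanning the past subspace. -/

open Filter Topology
open scoped lp

section lpCoordinates

variable {ι : Type*} [DecidableEq ι]

theorem lp.inner_single_one_left (i : ι) (ξ : ℓ²(ι, ℂ)) :
    inner ℂ (lp.single 2 i (1 : ℂ)) ξ = ξ i := by
  simp [lp.inner_single_left]

theorem lp.apply_eq_inner_star_single (T : ℓ²(ι, ℂ) →L[ℂ] ℓ²(ι, ℂ)) (ξ : ℓ²(ι, ℂ)) (i : ι) :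
    T ξ i = inner ℂ (star T (lp.single 2 i 1)) ξ := by
  rw [← lp.inner_single_one_left, ContinuousLinearMap.star_eq_adjoint,
    ContinuousLinearMap.adjoint_inner_left]

theorem lp.star_apply_eq_inner_single (T : ℓ²(ι, ℂ) →L[ℂ] ℓ²(ι, ℂ)) (ξ : ℓ²(ι, ℂ)) (i : ι) :
    star T ξ i = inner ℂ (T (lp.single 2 i 1)) ξ := by
  rw [← lp.inner_single_one_left, ContinuousLinearMap.star_eq_adjoint,
    ContinuousLinearMap.adjoint_inner_right]

theorem lp.tendsto_norm_apply_cofinite_zero {E : ι → Type*} [∀ i, NormedAddCommGroup (E i)]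
    {p : ENNReal} [Fact (1 ≤ p)] (hp : p ≠ ⊤) (f : lp E p) :
    Tendsto (fun i => ‖f i‖) cofinite (𝓝 0) := by
  have := (lp.hasSum_single hp f).summable.tendsto_cofinite_zero.norm
  simpa [lp.norm_single (zero_lt_one.trans_le Fact.out)] using this

theorem lp.mem_closure_span_of_single_mem {𝕜 : Type*} [NontriviallyNormedField 𝕜]
    {p : ENNReal} [Fact (1 ≤ p)] (hp : p ≠ ⊤) {V : Set (lp (fun _ : ι => 𝕜) p)}
    (f : lp (fun _ : ι => 𝕜) p) (hV : ∀ i, f i ≠ 0 → lp.single p i 1 ∈ V) :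
    f ∈ closure (Submodule.span 𝕜 V : Set (lp (fun _ : ι => 𝕜) p)) := by
  refine mem_closure_of_tendsto (lp.hasSum_single hp f) (Eventually.of_forall fun s => ?_)
  refine Submodule.sum_mem _ fun i _ => ?_
  by_cases hi : f i = 0
  · simp [hi]
  · rw [← mul_one (f i), ← smul_eq_mul, lp.single_smul]
    exact Submodule.smul_mem _ _ (Submodule.subset_span (hV i hi))

end lpCoordinates

theorem smul_eq_neg_smul_of_inv_smul_eq {K E : Type*} [Field K] [AddCommGroup E] [Module K E]
    {s t : K} (hs : s ≠ 0) (ht : t ≠ 0) {x y : E} (h : t⁻¹ • x = -s⁻¹ • y) : s • x = -t • y := by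
  calc s • x = (s * t) • (t⁻¹ • x) := by rw [smul_smul, mul_assoc, mul_inv_cancel₀ ht, mul_one]
    _ = -t • y := by rw [h, smul_smul]; congr 1; field_simp

theorem sub_neg_one_pow_mul_ne_zero {x y : ℂ} (hxy : x + y = 1) (hne : x ≠ y) (n : ℕ) :
    x - (-1) ^ n * y ≠ 0 := by
  rcases n.even_or_odd with hn | hn
  · simpa [hn.neg_one_pow, sub_eq_zero] using hne
  · simp [hn.neg_one_pow, hxy]

theorem sq_ofReal_sqrt {x : ℝ} (hx : 0 ≤ x) : ((√x : ℝ) : ℂ) ^ 2 = x := by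
  rw [← Complex.ofReal_pow, Real.sq_sqrt hx]

theorem le_sqrt_mul_sqrt_one_sub {ε x : ℝ} (hε : 0 ≤ ε) (h0 : ε ≤ x) (h1 : x ≤ 1 - ε) :
    ε ≤ √x * √(1 - x) := by
  rw [← Real.sqrt_mul (hε.trans h0), Real.le_sqrt hε (by nlinarith)]
  nlinarith

theorem Finset.notMem_and_insert_eq_iff {α : Type*} [DecidableEq α] {a : α} {s t : Finset α} :
    a ∉ s ∧ insert a s = t ↔ a ∈ t ∧ s = t.erase a := by
  grind

theorem Finset.mem_and_erase_eq_iff {α : Type*} [DecidableEq α] {a : α} {s t : Finset α} :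
    a ∈ s ∧ s.erase a = t ↔ a ∉ t ∧ s = insert a t := by
  grind

theorem nlt_insert_self (l : ℤ) (X : Finset ℤ) : nlt l (insert l X) = nlt l X := by
  simp [nlt, Finset.filter_insert]

theorem nlt_erase_self (l : ℤ) (X : Finset ℤ) : nlt l (X.erase l) = nlt l X := by
  rw [nlt, nlt, Finset.filter_erase, Finset.erase_eq_of_notMem (by simp)]

theorem inner_carE_carE (p q : Finset ℤ × Finset ℤ) :
    inner ℂ (carE p) (carE q) = if p = q then 1 else 0 := by
  rw [carE, lp.inner_single_one_left, carE, lp.single_apply, Pi.single_apply]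

def IsQuasiFreeAt (l : ℤ) (α β : ℝ) (T : CARSpace →L[ℂ] CARSpace) : Prop :=
  ∀ A B : Finset ℤ,
    T (carE (A, B)) =
      ((α : ℂ) * (-1) ^ B.card * (-1) ^ nlt l A * (if l ∉ A then 1 else 0)) •
          carE (insert l A, B) +
        ((β : ℂ) * (-1) ^ nlt l B * (if l ∈ B then 1 else 0)) • carE (A, B.erase l)

namespace IsQuasiFreeAt

variable {l : ℤ} {α β : ℝ} {T : CARSpace →L[ℂ] CARSpace}

theorem star_carE (hT : IsQuasiFreeAt l α β T) (A B : Finset ℤ) :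
    star T (carE (A, B)) =
      ((α : ℂ) * (-1) ^ B.card * (-1) ^ nlt l A * (if l ∈ A then 1 else 0)) •
          carE (A.erase l, B) +
        ((β : ℂ) * (-1) ^ nlt l B * (if l ∉ B then 1 else 0)) • carE (A, insert l B) := by
  ext ⟨A', B'⟩
  rw [lp.star_apply_eq_inner_single, ← carE, hT, inner_add_left, inner_smul_left,
    inner_smul_left, inner_carE_carE, inner_carE_carE]
  simp only [lp.coeFn_add, lp.coeFn_smul, Pi.add_apply, Pi.smul_apply, carE, lp.single_apply,
    Pi.single_apply, smul_eq_mul, map_mul, map_pow, map_neg, map_one, Complex.conj_ofReal,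
    apply_ite (starRingEnd ℂ), map_zero, Prod.mk.injEq, mul_boole, ← ite_and]
  refine congrArg₂ (· + ·) (ite_congr (propext ?_) ?_ fun _ => rfl)
    (ite_congr (propext ?_) ?_ fun _ => rfl)
  · have := Finset.notMem_and_insert_eq_iff (a := l) (s := A') (t := A)
    tauto
  · rintro ⟨⟨rfl, rfl⟩, -⟩
    rw [nlt_erase_self]
  · have := Finset.mem_and_erase_eq_iff (a := l) (s := B') (t := B)
    tauto
  · rintro ⟨⟨rfl, rfl⟩, -⟩
    rw [nlt_insert_self]

theorem apply (hT : IsQuasiFreeAt l α β T) (ξ : CARSpace) (A B : Finset ℤ) :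
    T ξ (A, B) =
      (α : ℂ) * (-1) ^ B.card * (-1) ^ nlt l A * (if l ∈ A then 1 else 0) * ξ (A.erase l, B) +
        (β : ℂ) * (-1) ^ nlt l B * (if l ∉ B then 1 else 0) * ξ (A, insert l B) := by
  rw [lp.apply_eq_inner_star_single, ← carE, hT.star_carE, inner_add_left, inner_smul_left,
    inner_smul_left]
  simp [carE, lp.inner_single_one_left, apply_ite (starRingEnd ℂ)]

theorem star_apply (hT : IsQuasiFreeAt l α β T) (ξ : CARSpace) (A B : Finset ℤ) :
    star T ξ (A, B) =
      (α : ℂ) * (-1) ^ B.card * (-1) ^ nlt l A * (if l ∉ A then 1 else 0) * ξ (insert l A, B) +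
        (β : ℂ) * (-1) ^ nlt l B * (if l ∈ B then 1 else 0) * ξ (A, B.erase l) := by
  rw [lp.star_apply_eq_inner_single, ← carE, hT, inner_add_left, inner_smul_left,
    inner_smul_left]
  simp [carE, lp.inner_single_one_left, apply_ite (starRingEnd ℂ)]

end IsQuasiFreeAt

theorem IsCAR_a.isQuasiFreeAt {lam : ℤ → ℝ} {a : ℤ → CARSpace →L[ℂ] CARSpace}
    (ha : IsCAR_a lam a) (l : ℤ) : IsQuasiFreeAt l √(1 - lam l) √(lam l) (a l) := by
  intro A B
  simp only [ite_not]
  exact ha l A B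

theorem IsCAR_b.isQuasiFreeAt {lam : ℤ → ℝ} {b : ℤ → CARSpace →L[ℂ] CARSpace}
    (hb : IsCAR_b lam b) (l : ℤ) : IsQuasiFreeAt l √(lam l) (-√(1 - lam l)) (b l) := by
  intro A B
  rw [hb, sub_eq_add_neg, ← neg_smul]
  simp only [ite_not, Complex.ofReal_neg, neg_mul]

theorem IsCAR_G.star_carE {G : CARSpace →L[ℂ] CARSpace} (hG : IsCAR_G G) (A B : Finset ℤ) :
    star G (carE (A, B)) = ((-1 : ℂ) ^ (A.card + B.card)) • carE (A, B) := by
  ext ⟨A', B'⟩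
  rw [lp.star_apply_eq_inner_single, ← carE, hG, inner_smul_left, inner_carE_carE]
  simp only [lp.coeFn_smul, Pi.smul_apply, carE, lp.single_apply, Pi.single_apply, smul_eq_mul]
  split_ifs <;> simp_all

theorem IsCAR_G.apply {G : CARSpace →L[ℂ] CARSpace} (hG : IsCAR_G G) (ξ : CARSpace)
    (A B : Finset ℤ) : G ξ (A, B) = (-1) ^ (A.card + B.card) * ξ (A, B) := by
  rw [lp.apply_eq_inner_star_single, ← carE, hG.star_carE, inner_smul_left]
  simp [carE, lp.inner_single_one_left]

namespace IntertwinesAt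

variable {lam : ℤ → ℝ} {a b : ℤ → CARSpace →L[ℂ] CARSpace} {G : CARSpace →L[ℂ] CARSpace}
  {l : ℤ} {ξ : CARSpace}

theorem sqrt_smul_eq (hξ : IntertwinesAt lam a b G l ξ) (h0 : 0 < lam l) (h1 : lam l < 1) :
    (√(lam l) : ℂ) • a l ξ = -(√(1 - lam l) : ℂ) • G (b l ξ) ∧
      (√(1 - lam l) : ℂ) • star (a l) ξ = -(√(lam l) : ℂ) • star (b l) (G ξ) := by
  have hs : (√(lam l) : ℂ) ≠ 0 := by exact_mod_cast (Real.sqrt_pos.2 h0).ne'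
  have ht : (√(1 - lam l) : ℂ) ≠ 0 := by exact_mod_cast (Real.sqrt_pos.2 (sub_pos.2 h1)).ne'
  exact ⟨smul_eq_neg_smul_of_inv_smul_eq hs ht hξ.1, smul_eq_neg_smul_of_inv_smul_eq ht hs hξ.2⟩

theorem apply_insert_left_eq_zero (hξ : IntertwinesAt lam a b G l ξ)
    (ha : IsCAR_a lam a) (hb : IsCAR_b lam b) (hG : IsCAR_G G)
    (h0 : 0 < lam l) (h1 : lam l < 1) (hhalf : lam l ≠ 1 / 2)
    {A B : Finset ℤ} (hA : l ∉ A) (hB : l ∉ B) : ξ (insert l A, B) = 0 := by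
  have h := congrArg (· (A, B)) (hξ.sqrt_smul_eq h0 h1).2
  simp only [lp.coeFn_smul, Pi.smul_apply, smul_eq_mul] at h
  rw [(ha.isQuasiFreeAt l).star_apply, (hb.isQuasiFreeAt l).star_apply, hG.apply, hG.apply,
    if_pos hA, if_neg hB, Finset.card_insert_of_notMem hA] at h
  have key : (-1) ^ B.card * (-1) ^ nlt l A *
      ((√(1 - lam l) : ℂ) ^ 2 - (-1) ^ (A.card + B.card) * (√(lam l) : ℂ) ^ 2) *
        ξ (insert l A, B) = 0 := by
    linear_combination h
  rw [sq_ofReal_sqrt h0.le, sq_ofReal_sqrt (sub_pos.2 h1).le] at key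
  have hne : ((1 - lam l : ℝ) : ℂ) ≠ lam l := by
    exact_mod_cast fun h => hhalf (by linarith)
  have hc := sub_neg_one_pow_mul_ne_zero (by push_cast; ring) hne (A.card + B.card)
  exact (mul_eq_zero.1 key).resolve_left (mul_ne_zero (by simp) hc)

theorem apply_insert_right_eq_zero (hξ : IntertwinesAt lam a b G l ξ)
    (ha : IsCAR_a lam a) (hb : IsCAR_b lam b) (hG : IsCAR_G G)
    (h0 : 0 < lam l) (h1 : lam l < 1) (hhalf : lam l ≠ 1 / 2)
    {A B : Finset ℤ} (hA : l ∉ A) (hB : l ∉ B) : ξ (A, insert l B) = 0 := by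
  have h := congrArg (· (A, B)) (hξ.sqrt_smul_eq h0 h1).1
  simp only [lp.coeFn_smul, Pi.smul_apply, smul_eq_mul] at h
  rw [(ha.isQuasiFreeAt l).apply, hG.apply, (hb.isQuasiFreeAt l).apply, if_neg hA, if_pos hB] at h
  have key : (-1) ^ nlt l B *
      ((√(lam l) : ℂ) ^ 2 - (-1) ^ (A.card + B.card) * (√(1 - lam l) : ℂ) ^ 2) *
        ξ (A, insert l B) = 0 := by
    push_cast at h
    linear_combination h
  rw [sq_ofReal_sqrt h0.le, sq_ofReal_sqrt (sub_pos.2 h1).le] at key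
  have hne : (lam l : ℂ) ≠ ((1 - lam l : ℝ) : ℂ) := by
    exact_mod_cast fun h => hhalf (by linarith)
  have hc := sub_neg_one_pow_mul_ne_zero (by push_cast; ring) hne (A.card + B.card)
  exact (mul_eq_zero.1 key).resolve_left (mul_ne_zero (by simp) hc)

/-- The second intertwining equation read at the coordinate `(A, B ∪ {l})`. -/
theorem apply_insert_insert_relation (hξ : IntertwinesAt lam a b G l ξ)
    (ha : IsCAR_a lam a) (hb : IsCAR_b lam b) (hG : IsCAR_G G)
    (h0 : 0 < lam l) (h1 : lam l < 1) {A B : Finset ℤ} (hA : l ∉ A) (hB : l ∉ B) :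
    (-1) ^ (B.card + 1) * (-1) ^ nlt l A *
          ((1 - lam l : ℝ) + (-1) ^ (A.card + B.card) * (lam l : ℂ)) *
          ξ (insert l A, insert l B) +
        (√(lam l) * √(1 - lam l) : ℝ) * (-1) ^ nlt l B * (1 - (-1) ^ (A.card + B.card)) *
          ξ (A, B) = 0 := by
  have h := congrArg (· (A, insert l B)) (hξ.sqrt_smul_eq h0 h1).2
  simp only [lp.coeFn_smul, Pi.smul_apply, smul_eq_mul] at h
  rw [(ha.isQuasiFreeAt l).star_apply, (hb.isQuasiFreeAt l).star_apply, hG.apply, hG.apply,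
    if_pos hA, if_pos (Finset.mem_insert_self l B), Finset.erase_insert hB,
    Finset.card_insert_of_notMem hA, Finset.card_insert_of_notMem hB, nlt_insert_self] at h
  rw [← sq_ofReal_sqrt h0.le, ← sq_ofReal_sqrt (sub_pos.2 h1).le]
  push_cast at h ⊢
  linear_combination h

theorem apply_insert_insert_eq_zero (hξ : IntertwinesAt lam a b G l ξ)
    (ha : IsCAR_a lam a) (hb : IsCAR_b lam b) (hG : IsCAR_G G)
    (h0 : 0 < lam l) (h1 : lam l < 1) {A B : Finset ℤ} (hA : l ∉ A) (hB : l ∉ B)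
    (hpar : Even (A.card + B.card)) : ξ (insert l A, insert l B) = 0 := by
  have h := hξ.apply_insert_insert_relation ha hb hG h0 h1 hA hB
  rw [hpar.neg_one_pow] at h
  simpa using h

theorem norm_apply_le (hξ : IntertwinesAt lam a b G l ξ)
    (ha : IsCAR_a lam a) (hb : IsCAR_b lam b) (hG : IsCAR_G G)
    (h0 : 0 < lam l) (h1 : lam l < 1) {A B : Finset ℤ} (hA : l ∉ A) (hB : l ∉ B)
    (hpar : Odd (A.card + B.card)) :
    2 * (√(lam l) * √(1 - lam l)) * ‖ξ (A, B)‖ ≤ ‖ξ (insert l A, insert l B)‖ := by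
  have h := hξ.apply_insert_insert_relation ha hb hG h0 h1 hA hB
  rw [hpar.neg_one_pow] at h
  have hc : ((1 - lam l : ℝ) : ℂ) + -1 * (lam l : ℂ) = (1 - 2 * lam l : ℝ) := by
    push_cast; ring
  have h' := congrArg norm (eq_neg_of_add_eq_zero_right h)
  rw [hc] at h'
  simp only [norm_mul, norm_neg, norm_pow, norm_one, one_pow, one_mul, mul_one,
    Complex.norm_real, Real.norm_eq_abs, abs_of_nonneg (Real.sqrt_nonneg _)] at h'
  norm_num at h'
  calc 2 * (√(lam l) * √(1 - lam l)) * ‖ξ (A, B)‖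
      = |1 - 2 * lam l| * ‖ξ (insert l A, insert l B)‖ := by rw [← h']; ring
    _ ≤ ‖ξ (insert l A, insert l B)‖ :=
      mul_le_of_le_one_left (norm_nonneg _) (abs_le.2 ⟨by linarith, by linarith⟩)

theorem apply_eq_zero_of_mem (hξ : IntertwinesAt lam a b G l ξ)
    (ha : IsCAR_a lam a) (hb : IsCAR_b lam b) (hG : IsCAR_G G)
    (h0 : 0 < lam l) (h1 : lam l < 1) (hhalf : lam l ≠ 1 / 2) {A B : Finset ℤ}
    (hl : l ∈ A ∨ l ∈ B) (hpar : Even (A.card + B.card)) : ξ (A, B) = 0 := by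
  by_cases hA : l ∈ A <;> by_cases hB : l ∈ B
  · have hpar' : Even ((A.erase l).card + (B.erase l).card) := by
      rw [Finset.card_erase_of_mem hA, Finset.card_erase_of_mem hB]
      have := Finset.card_pos.2 ⟨l, hA⟩
      have := Finset.card_pos.2 ⟨l, hB⟩
      rw [Nat.even_iff] at hpar ⊢
      omega
    simpa [hA, hB] using hξ.apply_insert_insert_eq_zero ha hb hG h0 h1
      (Finset.notMem_erase l A) (Finset.notMem_erase l B) hpar'
  · simpa [hA] using
      hξ.apply_insert_left_eq_zero ha hb hG h0 h1 hhalf (Finset.notMem_erase l A) hB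
  · simpa [hB] using
      hξ.apply_insert_right_eq_zero ha hb hG h0 h1 hhalf hA (Finset.notMem_erase l B)
  · exact absurd hl (by tauto)

end IntertwinesAt

section Support

variable {lam : ℤ → ℝ} {ε : ℝ} {a b : ℤ → CARSpace →L[ℂ] CARSpace}
  {G : CARSpace →L[ℂ] CARSpace} {ξ : CARSpace}

theorem apply_eq_zero_of_odd (hε : 0 < ε) (hlam : ∀ l : ℤ, 0 ≤ l → ε ≤ lam l ∧ lam l ≤ 1 - ε)
    (ha : IsCAR_a lam a) (hb : IsCAR_b lam b) (hG : IsCAR_G G)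
    (hξ : ∀ l : ℤ, 0 ≤ l → IntertwinesAt lam a b G l ξ) {A B : Finset ℤ}
    (hpar : Odd (A.card + B.card)) : ξ (A, B) = 0 := by
  obtain ⟨M, hM⟩ := (A ∪ B).bddAbove
  have hfresh (k : ℕ) : 0 ≤ |M| + 1 + k ∧ |M| + 1 + k ∉ A ∧ |M| + 1 + k ∉ B := by
    have hlt : ∀ n ∈ A ∪ B, n < |M| + 1 + k := fun n hn => by
      have := hM (Finset.mem_coe.2 hn)
      have := le_abs_self M
      omega
    exact ⟨by positivity, fun h => (hlt _ (Finset.mem_union_left B h)).false,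
      fun h => (hlt _ (Finset.mem_union_right A h)).false⟩
  set f : ℕ → Finset ℤ × Finset ℤ := fun k => (insert (|M| + 1 + k) A, insert (|M| + 1 + k) B)
  have hbound (k : ℕ) : 2 * ε * ‖ξ (A, B)‖ ≤ ‖ξ (f k)‖ := by
    obtain ⟨hk, hkA, hkB⟩ := hfresh k
    obtain ⟨hl0, hl1⟩ := hlam _ hk
    calc 2 * ε * ‖ξ (A, B)‖
        ≤ 2 * (√(lam (|M| + 1 + k)) * √(1 - lam (|M| + 1 + k))) * ‖ξ (A, B)‖ := by
          gcongr
          exact le_sqrt_mul_sqrt_one_sub hε.le hl0 hl1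
      _ ≤ ‖ξ (f k)‖ :=
          (hξ _ hk).norm_apply_le ha hb hG (by linarith) (by linarith) hkA hkB hpar
  have hf : Function.Injective f := fun k k' h => by
    have hmem : |M| + 1 + k ∈ insert (|M| + 1 + k') A :=
      (Prod.mk.inj h).1 ▸ Finset.mem_insert_self _ A
    rcases Finset.mem_insert.1 hmem with h' | h'
    · omega
    · exact absurd h' (hfresh k).2.1
  have hlim : Tendsto (fun k => ‖ξ (f k)‖) atTop (𝓝 0) :=
    (lp.tendsto_norm_apply_cofinite_zero (by norm_num) ξ).comp
      (Nat.cofinite_eq_atTop ▸ hf.tendsto_cofinite)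
  exact norm_le_zero_iff.1
    (nonpos_of_mul_nonpos_right (ge_of_tendsto' hlim hbound) (by positivity))

theorem mem_past_of_apply_ne_zero (hε : 0 < ε)
    (hlam : ∀ l : ℤ, ε ≤ lam l ∧ lam l ≤ 1 - ε ∧ lam l ≠ 1 / 2)
    (ha : IsCAR_a lam a) (hb : IsCAR_b lam b) (hG : IsCAR_G G)
    (hξ : ∀ l : ℤ, 0 ≤ l → IntertwinesAt lam a b G l ξ) {A B : Finset ℤ} (h : ξ (A, B) ≠ 0) :
    (∀ n ∈ A, n < 0) ∧ (∀ n ∈ B, n < 0) ∧ A.card % 2 = B.card % 2 := by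
  have hpar : Even (A.card + B.card) := by
    by_contra hodd
    exact h (apply_eq_zero_of_odd hε (fun l _ => ⟨(hlam l).1, (hlam l).2.1⟩) ha hb hG hξ
      (Nat.not_even_iff_odd.1 hodd))
  have hpast (n : ℤ) (hn : n ∈ A ∨ n ∈ B) : n < 0 := by
    by_contra! hn0
    obtain ⟨h0, h1, hhalf⟩ := hlam n
    exact h ((hξ n hn0).apply_eq_zero_of_mem ha hb hG (by linarith) (by linarith) hhalf hn hpar)
  refine ⟨fun n hn => hpast n (.inl hn), fun n hn => hpast n (.inr hn), ?_⟩
  rw [Nat.even_add, Nat.even_iff, Nat.even_iff] at hpar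
  omega

end Support

/-- with past `P = {n < 0}` and future `F = {n ≥ 0}`, assume
`ε ≤ λ_l ≤ 1−ε`, `λ_l ≠ 1/2` for all `l`, with `0 < ε < 1/2`. If `ξ ∈ H` satisfies the
`l`-th intertwining equations for every `l ∈ F`, then `ξ` belongs to the closed linear
span of `{e_{(A,B)} : A, B ⊆ P finite, card A ≡ card B (mod 2)}`. -/
theorem stmt16 (lam : ℤ → ℝ) (ε : ℝ) (hε : 0 < ε ∧ ε < 1 / 2)
    (hlam : ∀ l : ℤ, ε ≤ lam l ∧ lam l ≤ 1 - ε ∧ lam l ≠ 1 / 2)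
    (a b : ℤ → CARSpace →L[ℂ] CARSpace) (G : CARSpace →L[ℂ] CARSpace)
    (ha : IsCAR_a lam a) (hb : IsCAR_b lam b) (hG : IsCAR_G G)
    (ξ : CARSpace) (hξ : ∀ l : ℤ, 0 ≤ l → IntertwinesAt lam a b G l ξ) :
    ξ ∈ pastSpan := by
  refine lp.mem_closure_span_of_single_mem ENNReal.ofNat_ne_top ξ fun ⟨A, B⟩ h => ?_
  obtain ⟨hA, hB, hpar⟩ := mem_past_of_apply_ne_zero hε.1 hlam ha hb hG hξ h
  exact ⟨A, B, hA, hB, hpar, rfl⟩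

end
end

section
/- In the concrete quasi-free CAR model with past P = {n ∈ ℤ : n < 0} and future F = {n ∈ ℤ : n ≥ 0}, with any λ : ℤ → ℝ, 0 < λ_l < 1: let V be the closed linear span of {e_{(A,B)} : A ⊆ P, B ⊆ P finite, card A ≡ card B (mod 2)}. Then for every ξ ∈ V, every g ∈ P, and every operator z in the unital *-subalgebra of B(H) generated by {a_l : l ∈ F}, one has ⟨z ξ, e_{({g},∅)}⟩ = 0. (Hence the set {y·α_t(x)Ω : x ∈ M_R, y ∈ α_t(M_R)′ ∩ M_R} is orthogonal to the nonzero vector e_{({g},∅)} ∈ M_RΩ, which is the key computation showing the CAR flow is not extendable.) -/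
/- The concrete quasi-free CAR model: `H = ℓ²(Finset ℤ × Finset ℤ)` with orthonormal basis
`e (A, B)`, vacuum `Ω = e (∅, ∅)`, and operators `a l`, `b l`, `G` given on the basis by the
quasi-free formulas with symbol `λ` (diagonal, `R h_l = λ_l h_l`). -/

noncomputable section

local notation "⟪" x ", " y "⟫" => @inner ℂ _ _ x y

/-! The parity operator `U e_{(A,B)} = (-1)^{n(0,A) + n(0,B)} e_{(A,B)}` sees only past indices,
so it commutes with each `a_l`, `l ≥ 0`, which changes `A` and `B` only at `l`; being
self-adjoint, it then commutes with the whole *-algebra they generate. It fixes `pastSpan` and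
negates `e_{({g},∅)}`, so `z ξ` and `e_{({g},∅)}` lie in its orthogonal `±1`-eigenspaces. -/

theorem LinearMap.IsSymmetric.inner_eq_zero_of_eq_of_eq_neg {𝕜 E : Type*} [RCLike 𝕜]
    [NormedAddCommGroup E] [InnerProductSpace 𝕜 E] {T : E →ₗ[𝕜] E} (hT : T.IsSymmetric) {x y : E} (hx : T x = x)
    (hy : T y = -y) : inner 𝕜 x y = 0 := by
  have h : inner 𝕜 x y = -inner 𝕜 x y := by
    conv_lhs => rw [← hx]
    rw [hT, hy, inner_neg_right]
  exact CharZero.eq_neg_self_iff.mp h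

theorem StarAlgebra.commute_of_mem_adjoin_of_forall_mem_commute {R A : Type*} [CommSemiring R]
    [StarRing R] [Semiring A] [Algebra R A] [StarRing A] [StarModule R A] {a b : A} {s : Set A}
    (hb : b ∈ StarAlgebra.adjoin R s) (h : ∀ b ∈ s, Commute a b)
    (h_star : ∀ b ∈ s, Commute a (star b)) : Commute a b :=
  Algebra.commute_of_mem_adjoin_of_forall_mem_commute hb fun b hb =>
    hb.elim (h b) (by simpa using h_star (star b))

namespace lp

variable {ι 𝕜 : Type*} [RCLike 𝕜]

theorem memℓp_neg_one_pow_mul {p : ENNReal} (σ : ι → ℕ) (f : lp (fun _ : ι => 𝕜) p) :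
    Memℓp (fun i => (-1 : 𝕜) ^ σ i * f i) p :=
  memℓp_norm_iff.1 <| by simpa using (lp.memℓp f).norm

def gradingLinearMap (σ : ι → ℕ) : ℓ²(ι, 𝕜) →ₗ[𝕜] ℓ²(ι, 𝕜) where
  toFun f := ⟨_, memℓp_neg_one_pow_mul σ f⟩
  map_add' f g := lp.ext <| funext fun i => mul_add _ (f i) (g i)
  map_smul' c f := lp.ext <| funext fun i => mul_left_comm _ c (f i)

theorem norm_gradingLinearMap (σ : ι → ℕ) (f : ℓ²(ι, 𝕜)) : ‖gradingLinearMap σ f‖ = ‖f‖ := by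
  have h2 : (0 : ℝ) < (2 : ENNReal).toReal := by norm_num
  rw [lp.norm_eq_tsum_rpow h2, lp.norm_eq_tsum_rpow h2]
  congr 1
  refine tsum_congr fun i => ?_
  simp [gradingLinearMap]

def gradingOp (σ : ι → ℕ) : ℓ²(ι, 𝕜) →L[𝕜] ℓ²(ι, 𝕜) :=
  (gradingLinearMap σ).mkContinuous 1 fun f => by rw [norm_gradingLinearMap, one_mul]

theorem gradingOp_apply (σ : ι → ℕ) (f : ℓ²(ι, 𝕜)) (i : ι) :
    gradingOp σ f i = (-1) ^ σ i * f i :=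
  rfl

theorem gradingOp_single [DecidableEq ι] (σ : ι → ℕ) (i : ι) (c : 𝕜) :
    gradingOp σ (lp.single 2 i c : ℓ²(ι, 𝕜)) = (-1 : 𝕜) ^ σ i • lp.single 2 i c := by
  ext j
  rw [gradingOp_apply, lp.coeFn_smul, Pi.smul_apply, smul_eq_mul]
  rcases eq_or_ne j i with rfl | h
  · rfl
  · simp [h]

theorem isSelfAdjoint_gradingOp (σ : ι → ℕ) : IsSelfAdjoint (gradingOp (𝕜 := 𝕜) σ) := by
  refine ContinuousLinearMap.isSelfAdjoint_iff_isSymmetric.2 fun f g => ?_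
  rw [lp.inner_eq_tsum, lp.inner_eq_tsum]
  refine tsum_congr fun i => ?_
  change g i * star ((-1) ^ σ i * f i) = (-1) ^ σ i * g i * star (f i)
  simp only [star_mul', star_pow, star_neg, star_one]
  ring

end lp

theorem nlt_insert_of_le {k l : ℤ} (h : k ≤ l) (X : Finset ℤ) :
    nlt k (insert l X) = nlt k X := by
  rw [nlt, Finset.filter_insert, if_neg (not_lt.2 h), nlt]

theorem nlt_erase_of_le {k l : ℤ} (h : k ≤ l) (X : Finset ℤ) : nlt k (X.erase l) = nlt k X := by
  rw [nlt, Finset.filter_erase, Finset.erase_eq_of_notMem fun hl => ?_, nlt]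
  exact not_lt.2 h (Finset.mem_filter.1 hl).2

theorem nlt_eq_card {k : ℤ} {X : Finset ℤ} (hX : ∀ n ∈ X, n < k) : nlt k X = X.card := by
  rw [nlt, Finset.filter_true_of_mem hX]

def pastParityOp : CARSpace →L[ℂ] CARSpace :=
  lp.gradingOp fun p => nlt 0 p.1 + nlt 0 p.2

theorem isSelfAdjoint_pastParityOp : IsSelfAdjoint pastParityOp :=
  lp.isSelfAdjoint_gradingOp _

theorem pastParityOp_carE (A B : Finset ℤ) :
    pastParityOp (carE (A, B)) = (-1 : ℂ) ^ (nlt 0 A + nlt 0 B) • carE (A, B) :=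
  lp.gradingOp_single _ _ _

theorem commute_pastParityOp_of_nonneg {lam : ℤ → ℝ} {a : ℤ → CARSpace →L[ℂ] CARSpace}
    (ha : IsCAR_a lam a) {l : ℤ} (hl : 0 ≤ l) : Commute pastParityOp (a l) := by
  refine lp.ext_continuousLinearMap (by simp) fun ⟨A, B⟩ => ContinuousLinearMap.ext_ring ?_
  change pastParityOp (a l (carE (A, B))) = a l (pastParityOp (carE (A, B)))
  rw [pastParityOp_carE, map_smul, ha, map_add, map_smul, map_smul, pastParityOp_carE,
    pastParityOp_carE, nlt_insert_of_le hl, nlt_erase_of_le hl]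
  module

theorem pastParityOp_of_mem_pastSpan {ξ : CARSpace} (hξ : ξ ∈ pastSpan) :
    pastParityOp ξ = ξ := by
  suffices h : pastSpan ⊆ LinearMap.eqLocus (pastParityOp : CARSpace →ₗ[ℂ] CARSpace) .id from
    h hξ
  refine closure_minimal (Submodule.span_le.2 ?_)
    (isClosed_eq pastParityOp.continuous continuous_id)
  rintro _ ⟨A, B, hA, hB, hAB, rfl⟩
  have hsign : (-1 : ℂ) ^ (nlt 0 A + nlt 0 B) = 1 := by
    rw [nlt_eq_card hA, nlt_eq_card hB]
    exact Even.neg_one_pow (by rw [Nat.even_iff]; omega)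
  simp [pastParityOp_carE, hsign]

theorem pastParityOp_carE_singleton {g : ℤ} (hg : g < 0) :
    pastParityOp (carE ({g}, ∅)) = -carE ({g}, ∅) := by
  simp [pastParityOp_carE, nlt, Finset.filter_singleton, hg]

theorem stmt18_general (lam : ℤ → ℝ)
    (a : ℤ → CARSpace →L[ℂ] CARSpace) (ha : IsCAR_a lam a)
    (ξ : CARSpace) (hξ : ξ ∈ pastSpan)
    (g : ℤ) (hg : g < 0)
    (z : CARSpace →L[ℂ] CARSpace)
    (hz : z ∈ StarAlgebra.adjoin ℂ {x : CARSpace →L[ℂ] CARSpace | ∃ l : ℤ, 0 ≤ l ∧ x = a l}) :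
    ⟪z ξ, carE ({g}, ∅)⟫ = 0 := by
  have hzU : Commute pastParityOp z := by
    refine StarAlgebra.commute_of_mem_adjoin_of_forall_mem_commute hz ?_ ?_ <;>
      rintro _ ⟨l, hl, rfl⟩
    · exact commute_pastParityOp_of_nonneg ha hl
    · rw [← isSelfAdjoint_pastParityOp.star_eq]
      exact (commute_pastParityOp_of_nonneg ha hl).star_star
  have hzξ : pastParityOp (z ξ) = z ξ :=
    (DFunLike.congr_fun hzU.eq ξ).trans (congrArg z (pastParityOp_of_mem_pastSpan hξ))
  exact isSelfAdjoint_pastParityOp.isSymmetric.inner_eq_zero_of_eq_of_eq_neg hzξ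
    (pastParityOp_carE_singleton hg)

/-- let `V` be the closed linear span of
`{e_{(A,B)} : A, B ⊆ P finite, card A ≡ card B (mod 2)}`. Then for every `ξ ∈ V`, every
`g ∈ P = {n < 0}`, and every operator `z` in the unital *-subalgebra of `B(H)` generated by
`{a_l : l ∈ F = {n ≥ 0}}`, one has `⟨z ξ, e_{({g},∅)}⟩ = 0`. -/
theorem stmt18 (lam : ℤ → ℝ) (hlam : ∀ l, 0 < lam l ∧ lam l < 1)
    (a : ℤ → CARSpace →L[ℂ] CARSpace) (ha : IsCAR_a lam a)
    (ξ : CARSpace) (hξ : ξ ∈ pastSpan)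
    (g : ℤ) (hg : g < 0)
    (z : CARSpace →L[ℂ] CARSpace)
    (hz : z ∈ StarAlgebra.adjoin ℂ {x : CARSpace →L[ℂ] CARSpace | ∃ l : ℤ, 0 ≤ l ∧ x = a l}) :
    ⟪z ξ, carE ({g}, ∅)⟫ = 0 :=
  stmt18_general lam a ha ξ hξ g hg z hz

end
end
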